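/- The sparsest atomic decomposition size ‖x‖_{𝒜,0} = min{s : x = ∑_{k=1}^s c_k a(f_k,φ_k), c_k ≥ 0} equals the optimal value of the rank minimization problem: minimize rank(Toep(u)) over u ∈ ℂⁿ, t ∈ ℝ subject to [[Toep(u), x],[x*, t]] ⪰ 0. -/

import Mathlib

open Complex Matrix
open scoped ComplexOrder

/-- The atom `a(f, φ)` with entries `e^{i(2πfj + φ)}`, `j = 0, ..., n-1`. -/
noncomputable def atom (n : ℕ) (f φ : ℝ) : Fin n → ℂ :=
  fun j => Complex.exp (Complex.I * (2 * Real.pi * f * j + φ))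

/-- The Hermitian Toeplitz matrix with first column `u`. -/
noncomputable def Toep (n : ℕ) (u : Fin n → ℂ) : Matrix (Fin n) (Fin n) ℂ :=
  fun j k =>
    if (k : ℕ) ≤ (j : ℕ) then u ⟨(j : ℕ) - k, Nat.lt_of_le_of_lt (Nat.sub_le _ _) j.isLt⟩
    else star (u ⟨(k : ℕ) - j, Nat.lt_of_le_of_lt (Nat.sub_le _ _) k.isLt⟩)

/-- The block matrix `[[Toep(u), x], [x*, t]]`. -/
noncomputable def blockMat (n : ℕ) (u x : Fin n → ℂ) (t : ℝ) :
    Matrix (Fin n ⊕ Fin 1) (Fin n ⊕ Fin 1) ℂ :=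
  Matrix.fromBlocks (Toep n u) (fun j _ => x j) (fun _ k => star (x k)) (fun _ _ => (t : ℂ))

/-!
An atomic decomposition `x = ∑_{k<s} c_k a(f_k, φ_k)` gives the feasible point
`u_m = ∑_k c_k e^{2πi f_k m}`, `t = ∑_k c_k`: the block matrix is then `G diag(c) G*`, where the
columns of `G` are the vectors `(a(f_k, φ_k), 1)`, so it is positive semidefinite and `Toep(u)`
has rank at most `s`.

Conversely, write a feasible block matrix as the Gram matrix of vectors `w_0, …, w_{n-1}, y`.
Then `x_j = ⟪w_j, y⟫`, and since `Toep(u)` is Toeplitz the Gram matrix of the `w_j` is invariant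
under the shift `j ↦ j + 1`. If `r = rank Toep(u) < n`, the shift `w_j ↦ w_{j+1}` is an isometry
`U` of a space of dimension at most `r` containing every `w_j`, so `w_j = U^j w_0`; expanding
`w_0` in an eigenbasis of `U`, whose eigenvalues are unimodular, writes `x` as a combination of
at most `r` atoms. If `r = n`, any `n` atoms with distinct frequencies already span `ℂⁿ`.
So every feasible value of either problem bounds a feasible value of the other from above.
-/

open Submodule Module
open scoped InnerProductSpace ComplexConjugate Real

lemma exists_sum_mul_pow_eq_of_injective {K : Type*} [Field K] {n : ℕ} {μ : Fin n → K}
    (hμ : Function.Injective μ) (x : Fin n → K) :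
    ∃ z : Fin n → K, ∀ j : Fin n, x j = ∑ m, z m * μ m ^ (j : ℕ) := by
  have hdet : IsUnit (vandermonde μ).det := (det_vandermonde_ne_zero_iff.mpr hμ).isUnit
  have hx : x ᵥ* (vandermonde μ)⁻¹ ᵥ* vandermonde μ = x := by
    rw [vecMul_vecMul, nonsing_inv_mul _ hdet, vecMul_one]
  exact ⟨_, fun j => by simpa [vecMul, dotProduct] using (congrFun hx j).symm⟩

lemma linearIndependent_of_forall_notMem_span {K V : Type*} [DivisionRing K] [AddCommGroup V]
    [Module K V] {w : ℕ → V} {d : ℕ}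
    (h : ∀ m < d, w m ∉ span K (Set.range fun j : Fin m => w j)) :
    LinearIndependent K fun j : Fin d => w j := by
  induction d with
  | zero => exact linearIndependent_empty_type
  | succ d ih =>
    have hsnoc : (fun j : Fin (d + 1) => w j) = Fin.snoc (fun j : Fin d => w j) (w d) := by
      funext j
      refine Fin.lastCases ?_ (fun i => ?_) j <;> simp
    rw [hsnoc, linearIndependent_finSnoc]
    exact ⟨ih fun m hm => h m (by omega), h d (by omega)⟩

section InnerProductSpace

variable {𝕜 E : Type*} [RCLike 𝕜] [NormedAddCommGroup E] [InnerProductSpace 𝕜 E]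

lemma eq_of_inner_eq_inner_self {a b : E} (hab : ⟪a, b⟫_𝕜 = ⟪a, a⟫_𝕜) (hb : ⟪b, b⟫_𝕜 = ⟪a, a⟫_𝕜) :
    a = b := by
  have hba : ⟪b, a⟫_𝕜 = ⟪a, a⟫_𝕜 := by rw [← inner_conj_symm, hab, inner_conj_symm]
  rw [← sub_eq_zero, ← inner_self_eq_zero (𝕜 := 𝕜), inner_sub_left, inner_sub_right,
    inner_sub_right, hab, hba, hb, sub_self]

lemma Module.Basis.inner_eq_inner_of_forall {ι V : Type*} [Fintype ι] [AddCommGroup V]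
    [Module 𝕜 V] (b : Basis ι 𝕜 V) {f g : V →ₗ[𝕜] E} {y y' : E}
    (h : ∀ i, ⟪y, f (b i)⟫_𝕜 = ⟪y', g (b i)⟫_𝕜) (v : V) : ⟪y, f v⟫_𝕜 = ⟪y', g v⟫_𝕜 := by
  rw [← b.sum_repr v]
  simp only [map_sum, map_smul, inner_sum, inner_smul_right, h]

end InnerProductSpace

section Isometry

variable {E : Type*} [NormedAddCommGroup E] [InnerProductSpace ℂ E]

lemma LinearIsometry.norm_eq_one_of_apply_eq_smul (U : E →ₗᵢ[ℂ] E) {v : E} (hv : v ≠ 0) {c : ℂ}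
    (hc : U v = c • v) : ‖c‖ = 1 := by
  have h := U.norm_map v
  rw [hc, norm_smul] at h
  exact (mul_eq_right₀ (norm_ne_zero_iff.mpr hv)).mp h

lemma LinearIsometry.mem_orthogonal_span_singleton_of_apply_eq_smul (U : E →ₗᵢ[ℂ] E) {v : E}
    {c : ℂ} (hc0 : c ≠ 0) (hc : U v = c • v) {w : E} (hw : w ∈ (ℂ ∙ v)ᗮ) : U w ∈ (ℂ ∙ v)ᗮ := by
  rw [mem_orthogonal_singleton_iff_inner_right] at hw ⊢
  have hv : U (c⁻¹ • v) = v := by rw [map_smul, hc, inv_smul_smul₀ hc0]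
  rw [← hv, U.inner_map_map, inner_smul_left, hw, mul_zero]

theorem LinearIsometry.exists_eigenvectors_span [FiniteDimensional ℂ E] (U : E →ₗᵢ[ℂ] E) :
    ∃ (e : Fin (finrank ℂ E) → E) (l : Fin (finrank ℂ E) → ℂ),
      (∀ i, ‖l i‖ = 1) ∧ (∀ i, U (e i) = l i • e i) ∧ span ℂ (Set.range e) = ⊤ := by
  induction hm : finrank ℂ E generalizing E with
  | zero =>
    have := finrank_zero_iff.mp hm
    exact ⟨Fin.elim0, Fin.elim0, fun i => i.elim0, fun i => i.elim0, Subsingleton.elim _ _⟩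
  | succ m ih =>
    have : Nontrivial E := nontrivial_of_finrank_eq_succ hm
    have : Fact (finrank ℂ E = m + 1) := ⟨hm⟩
    obtain ⟨c, hc⟩ := Module.End.exists_eigenvalue (U.toLinearMap : Module.End ℂ E)
    obtain ⟨v, hv⟩ := hc.exists_hasEigenvector
    have hUv : U v = c • v := hv.apply_eq_smul
    have hc1 : ‖c‖ = 1 := U.norm_eq_one_of_apply_eq_smul hv.2 hUv
    have hc0 : c ≠ 0 := by rintro rfl; simp at hc1
    set F := (ℂ ∙ v)ᗮ
    let U' : F →ₗᵢ[ℂ] F :=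
      { toLinearMap := U.toLinearMap.restrict
          fun w hw => U.mem_orthogonal_span_singleton_of_apply_eq_smul hc0 hUv hw
        norm_map' := fun w => U.norm_map w }
    obtain ⟨e', l', hl', hUe', hspan'⟩ := ih U' (finrank_orthogonal_span_singleton hv.2)
    refine ⟨Fin.cons v (F.subtype ∘ e'), Fin.cons c l', fun i => ?_, fun i => ?_, ?_⟩
    · exact Fin.cases hc1 hl' i
    · exact Fin.cases hUv (fun j => congrArg F.subtype (hUe' j)) i
    · rw [Fin.range_cons, span_insert, Set.range_comp, span_image, hspan', Submodule.map_top,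
        range_subtype]
      exact sup_orthogonal_of_hasOrthogonalProjection

end Isometry

section Stationary

variable {𝕜 E : Type*} [RCLike 𝕜] [NormedAddCommGroup E] [InnerProductSpace 𝕜 E] {n : ℕ}
  {w : ℕ → E}

lemma exists_linearIsometry_inner_shift
    (hw : ∀ j k, j + 1 < n → k + 1 < n → ⟪w (j + 1), w (k + 1)⟫_𝕜 = ⟪w j, w k⟫_𝕜) {d : ℕ}
    (hdn : d < n) (hind : LinearIndependent 𝕜 fun j : Fin d => w j)
    (hdV : w d ∈ span 𝕜 (Set.range fun j : Fin d => w j)) :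
    ∃ U : span 𝕜 (Set.range fun j : Fin d => w j) →ₗᵢ[𝕜] span 𝕜 (Set.range fun j : Fin d => w j),
      ∀ v m, m + 1 < n → ⟪w (m + 1), (U v : E)⟫_𝕜 = ⟪w m, (v : E)⟫_𝕜 := by
  set V := span 𝕜 (Set.range fun j : Fin d => w j)
  let b := Basis.span hind
  have hb : ∀ j, (b j : E) = w j := fun j => by simp [b, Basis.span_apply]
  have hsucc : ∀ j : Fin d, w (j + 1) ∈ V := by
    intro j
    by_cases h : (j : ℕ) + 1 < d
    · exact subset_span ⟨⟨j + 1, h⟩, rfl⟩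
    · rw [show (j : ℕ) + 1 = d by omega]
      exact hdV
  let U : V →ₗ[𝕜] V := b.constr 𝕜 fun j => ⟨w (j + 1), hsucc j⟩
  have hUb : ∀ j, (U (b j) : E) = w (j + 1) := fun j => by simp [U, b.constr_basis]
  have hshift : ∀ v m, m + 1 < n → ⟪w (m + 1), (U v : E)⟫_𝕜 = ⟪w m, (v : E)⟫_𝕜 :=
    fun v m hm => b.inner_eq_inner_of_forall (f := V.subtype ∘ₗ U) (g := V.subtype)
      (fun j => by simpa [hUb, hb] using hw m j hm (by omega)) v
  have hinner : ∀ v v' : V, ⟪U v, U v'⟫_𝕜 = ⟪v, v'⟫_𝕜 := fun v =>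
    b.inner_eq_inner_of_forall (f := U) (g := LinearMap.id) fun j => by
      rw [LinearMap.id_apply, Submodule.coe_inner, Submodule.coe_inner, hUb, hb,
        ← inner_conj_symm, hshift v j (by omega), inner_conj_symm]
  exact ⟨U.isometryOfInner hinner, hshift⟩

lemma iterate_eq_of_inner_shift
    (hw : ∀ j k, j + 1 < n → k + 1 < n → ⟪w (j + 1), w (k + 1)⟫_𝕜 = ⟪w j, w k⟫_𝕜)
    {V : Submodule 𝕜 E} (U : V →ₗᵢ[𝕜] V)
    (hU : ∀ v m, m + 1 < n → ⟪w (m + 1), (U v : E)⟫_𝕜 = ⟪w m, (v : E)⟫_𝕜) (h0 : w 0 ∈ V) :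
    ∀ j < n, (U^[j] ⟨w 0, h0⟩ : E) = w j := by
  intro j hj
  induction j with
  | zero => rfl
  | succ j ih =>
    -- `w_{j+1}` and `U w_j` have the same norm as `w_j`, and inner product `‖w_j‖²`.
    have hwj := ih (by omega)
    rw [Function.iterate_succ_apply']
    refine (eq_of_inner_eq_inner_self (𝕜 := 𝕜) ?_ ?_).symm
    · rw [hU _ j hj, hwj, hw j j hj hj]
    · rw [← Submodule.coe_inner, U.inner_map_map, Submodule.coe_inner, hwj, hw j j hj hj]

theorem exists_linearIsometry_iterate_eq
    (hw : ∀ j k, j + 1 < n → k + 1 < n → ⟪w (j + 1), w (k + 1)⟫_𝕜 = ⟪w j, w k⟫_𝕜)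
    (hdep : ¬LinearIndependent 𝕜 fun j : Fin n => w j) :
    ∃ d < n, ∃ (U : span 𝕜 (Set.range fun j : Fin d => w j) →ₗᵢ[𝕜]
        span 𝕜 (Set.range fun j : Fin d => w j)) (v₀ : span 𝕜 (Set.range fun j : Fin d => w j)),
      ∀ j < n, (U^[j] v₀ : E) = w j := by
  classical
  have hex : ∃ m, m < n ∧ w m ∈ span 𝕜 (Set.range fun j : Fin m => w j) := by
    by_contra! h
    exact hdep (linearIndependent_of_forall_notMem_span h)
  obtain ⟨hdn, hdV⟩ := Nat.find_spec hex
  have hind : LinearIndependent 𝕜 fun j : Fin (Nat.find hex) => w j :=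
    linearIndependent_of_forall_notMem_span fun m hm hmV => Nat.find_min hex hm ⟨by omega, hmV⟩
  obtain ⟨U, hU⟩ := exists_linearIsometry_inner_shift hw hdn hind hdV
  have h0 : w 0 ∈ span 𝕜 (Set.range fun j : Fin (Nat.find hex) => w j) := by
    rcases Nat.eq_zero_or_pos (Nat.find hex) with hd | hd
    · simpa [hd] using hdV
    · exact subset_span ⟨⟨0, hd⟩, rfl⟩
  exact ⟨_, hdn, U, _, iterate_eq_of_inner_shift hw U hU h0⟩

end Stationary

theorem exists_unimodular_harmonic_sum {E : Type*} [NormedAddCommGroup E]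
    [InnerProductSpace ℂ E] {n : ℕ} {w : ℕ → E}
    (hw : ∀ j k, j + 1 < n → k + 1 < n → ⟪w (j + 1), w (k + 1)⟫_ℂ = ⟪w j, w k⟫_ℂ)
    (hdep : ¬LinearIndependent ℂ fun j : Fin n => w j) :
    ∃ (r : ℕ) (e : Fin r → E) (α μ : Fin r → ℂ),
      r ≤ finrank ℂ (span ℂ (Set.range fun j : Fin n => w j)) ∧ (∀ m, ‖μ m‖ = 1) ∧
      ∀ j < n, w j = ∑ m, (α m * μ m ^ j) • e m := by
  obtain ⟨d, hdn, U, v₀, hU⟩ := exists_linearIsometry_iterate_eq hw hdep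
  have (m : ℕ) : FiniteDimensional ℂ (span ℂ (Set.range fun j : Fin m => w j)) :=
    FiniteDimensional.span_of_finite ℂ (Set.finite_range _)
  obtain ⟨e, μ, hμ, hUe, hspan⟩ := U.exists_eigenvectors_span
  obtain ⟨α, hα⟩ := (mem_span_range_iff_exists_fun ℂ).mp (hspan ▸ mem_top (x := v₀))
  have hiter : ∀ j, U^[j] v₀ = ∑ m, (α m * μ m ^ j) • e m := by
    intro j
    induction j with
    | zero => simp [hα]
    | succ j ih =>
      simp only [Function.iterate_succ_apply', ih, map_sum, map_smul, hUe, smul_smul, pow_succ,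
        mul_assoc]
  refine ⟨_, fun m => e m, α, μ, ?_, hμ, fun j hj => ?_⟩
  · exact finrank_mono (span_mono (Set.range_subset_iff.mpr fun j => ⟨⟨j, by omega⟩, rfl⟩))
  · rw [← hU j hj, hiter, Submodule.coe_sum]
    simp only [Submodule.coe_smul]

section Gram

variable {𝕜 ι : Type*} [RCLike 𝕜] [Fintype ι]

open MatrixOrder in
lemma Matrix.PosSemidef.exists_gram_eq {A : Matrix ι ι 𝕜} (hA : A.PosSemidef) :
    ∃ v : ι → EuclideanSpace 𝕜 ι, gram 𝕜 v = A := by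
  classical
  obtain ⟨B, rfl⟩ := CStarAlgebra.nonneg_iff_eq_star_mul_self.mp hA.nonneg
  refine ⟨fun i => WithLp.toLp 2 fun k => B k i, ?_⟩
  ext i j
  simp [mul_apply, PiLp.inner_apply, mul_comm]

lemma Matrix.rank_gram {E : Type*} [NormedAddCommGroup E] [InnerProductSpace 𝕜 E]
    [FiniteDimensional 𝕜 E] (v : ι → E) :
    (gram 𝕜 v).rank = finrank 𝕜 (span 𝕜 (Set.range v)) := by
  let b := stdOrthonormalBasis 𝕜 E
  let L : E ≃ₗ[𝕜] (Fin (finrank 𝕜 E) → 𝕜) :=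
    b.repr.toLinearEquiv.trans (WithLp.linearEquiv 2 𝕜 _)
  have hcols : Set.range (of fun i j => (b.repr (v j)).ofLp i).col =
      (L : E →ₗ[𝕜] _) '' Set.range v := by
    rw [← Set.range_comp]
    rfl
  rw [gram_eq_conjTranspose_mul b, rank_conjTranspose_mul_self, rank_eq_finrank_span_cols, hcols,
    span_image, LinearEquiv.finrank_map_eq]

end Gram

lemma exists_mem_Ico_eq_norm_mul_exp (γ : ℂ) :
    ∃ θ ∈ Set.Ico (0 : ℝ) (2 * π), γ = ‖γ‖ * exp (θ * I) := by
  set θ := toIcoMod Real.two_pi_pos 0 γ.arg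
  set k := toIcoDiv Real.two_pi_pos 0 γ.arg
  have hθ : (γ.arg : ℂ) - θ = k * (2 * π) := by
    exact_mod_cast (self_sub_toIcoMod Real.two_pi_pos 0 γ.arg).trans (zsmul_eq_mul _ _)
  have hexp : (θ : ℂ) * I = γ.arg * I + (-k : ℤ) * (2 * π * I) := by
    push_cast
    linear_combination (-I) * hθ
  refine ⟨θ, by simpa using toIcoMod_mem_Ico Real.two_pi_pos 0 γ.arg, ?_⟩
  rw [hexp, exp_add, exp_int_mul_two_pi_mul_I, mul_one, norm_mul_exp_arg_mul_I]

lemma exists_mem_Ico_exp_eq {μ : ℂ} (hμ : ‖μ‖ = 1) :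
    ∃ f ∈ Set.Ico (0 : ℝ) 1, exp (2 * π * f * I) = μ := by
  obtain ⟨θ, ⟨hθ0, hθ1⟩, hμθ⟩ := exists_mem_Ico_eq_norm_mul_exp μ
  refine ⟨θ / (2 * π), ⟨by positivity, by rwa [div_lt_one Real.two_pi_pos]⟩, ?_⟩
  rw [hμθ, hμ]
  push_cast
  field_simp

lemma atom_apply {n : ℕ} (f φ : ℝ) (j : Fin n) :
    atom n f φ j = exp (φ * I) * exp (2 * π * f * I) ^ (j : ℕ) := by
  rw [atom, ← exp_nat_mul, ← exp_add]
  ring_nf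

lemma atom_mul_star_atom {n : ℕ} (f φ : ℝ) (a b : Fin n) :
    atom n f φ a * star (atom n f φ b) = exp (2 * π * f * ((a : ℤ) - b : ℤ) * I) := by
  simp only [atom, Complex.star_def, ← exp_conj, ← exp_add, map_mul, map_add, conj_I,
    conj_ofReal, map_natCast, map_ofNat]
  push_cast
  ring_nf

lemma toep_apply_eq_of_sub_eq {n : ℕ} (u : Fin n → ℂ) {a b a' b' : Fin n}
    (h : (a : ℤ) - b = a' - b') : Toep n u a b = Toep n u a' b' := by
  unfold Toep
  split_ifs <;> first | (exfalso; omega) | (congr 2; omega) | (congr 3; omega)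

lemma toep_apply_of_conj_symm {n : ℕ} (g : ℤ → ℂ) (hg : ∀ m, g (-m) = star (g m)) (a b : Fin n) :
    Toep n (fun m => g m) a b = g (a - b) := by
  unfold Toep
  split_ifs with h
  · push_cast [h]
    rfl
  · rw [← hg]
    push_cast [(not_le.mp h).le]
    ring_nf

/-- `‖x‖_{𝒜,0}` is the infimum of this set. -/
def atomicSizes (n : ℕ) (x : Fin n → ℂ) : Set ℕ :=
  {s : ℕ | ∃ (c : Fin s → ℝ) (f φ : Fin s → ℝ),
    (∀ k, 0 ≤ c k) ∧ (∀ k, f k ∈ Set.Ico (0 : ℝ) 1) ∧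
    (∀ k, φ k ∈ Set.Ico (0 : ℝ) (2 * Real.pi)) ∧
    x = ∑ k, (c k : ℂ) • atom n (f k) (φ k)}

/-- The optimal value of the Toeplitz rank minimization problem is the infimum of this set. -/
def toeplitzRanks (n : ℕ) (x : Fin n → ℂ) : Set ℕ :=
  {r : ℕ | ∃ (u : Fin n → ℂ) (t : ℝ), (blockMat n u x t).PosSemidef ∧ r = (Toep n u).rank}

lemma card_mem_atomicSizes {ι : Type*} [Fintype ι] {n : ℕ} {x : Fin n → ℂ} (z μ : ι → ℂ)
    (hμ : ∀ m, ‖μ m‖ = 1) (hx : ∀ j : Fin n, x j = ∑ m, z m * μ m ^ (j : ℕ)) :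
    Fintype.card ι ∈ atomicSizes n x := by
  choose f hf hfμ using fun m => exists_mem_Ico_exp_eq (hμ m)
  choose φ hφ hzφ using fun m => exists_mem_Ico_eq_norm_mul_exp (z m)
  let e := (Fintype.equivFin ι).symm
  refine ⟨fun k => ‖z (e k)‖, fun k => f (e k), fun k => φ (e k), fun k => norm_nonneg _,
    fun k => hf _, fun k => hφ _, ?_⟩
  ext j
  rw [hx, Finset.sum_apply, ← e.sum_comp (fun m => z m * μ m ^ (j : ℕ))]
  refine Finset.sum_congr rfl fun k _ => ?_
  rw [Pi.smul_apply, smul_eq_mul, atom_apply, hfμ, ← mul_assoc, ← hzφ]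

lemma self_mem_atomicSizes (n : ℕ) (x : Fin n → ℂ) : n ∈ atomicSizes n x := by
  have hω := Complex.isPrimitiveRoot_exp (n + 1) n.succ_ne_zero
  obtain ⟨z, hz⟩ := exists_sum_mul_pow_eq_of_injective
    (μ := fun m : Fin n => exp (2 * π * I / (n + 1 : ℕ)) ^ (m : ℕ))
    (fun a b h => Fin.ext (hω.pow_inj (by omega) (by omega) h)) x
  have hμ (m : Fin n) : ‖exp (2 * π * I / (n + 1 : ℕ)) ^ (m : ℕ)‖ = 1 := by
    rw [norm_pow, hω.norm'_eq_one n.succ_ne_zero, one_pow]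
  simpa using card_mem_atomicSizes z _ hμ hz

theorem exists_mem_toeplitzRanks_le {n : ℕ} {x : Fin n → ℂ} {s : ℕ} (hs : s ∈ atomicSizes n x) :
    ∃ r ∈ toeplitzRanks n x, r ≤ s := by
  obtain ⟨c, f, φ, hc, -, -, rfl⟩ := hs
  let g : ℤ → ℂ := fun m => ∑ k, (c k : ℂ) * exp (2 * π * f k * m * I)
  have hg : ∀ m, g (-m) = star (g m) := fun m => by
    simp only [g, star_sum, star_mul', Complex.star_def, conj_ofReal, ← exp_conj, map_mul,
      conj_I, map_ofNat, map_intCast]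
    congr! 3
    push_cast
    ring
  let G₁ : Matrix (Fin n) (Fin s) ℂ := of fun j k => atom n (f k) (φ k) j
  let G₂ : Matrix (Fin 1) (Fin s) ℂ := of fun _ _ => 1
  let D : Matrix (Fin s) (Fin s) ℂ := diagonal fun k => (c k : ℂ)
  have hD : D.PosSemidef := PosSemidef.diagonal fun k => by simpa using hc k
  have hT : Toep n (fun m => g m) = G₁ * D * G₁ᴴ := by
    ext a b
    rw [toep_apply_of_conj_symm g hg, mul_apply]
    refine Finset.sum_congr rfl fun k _ => ?_
    simp only [D, G₁, mul_diagonal, conjTranspose_apply, of_apply]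
    rw [mul_right_comm (atom _ _ _ a), atom_mul_star_atom, mul_comm]
  have hblock : blockMat n (fun m => g m) (∑ k, (c k : ℂ) • atom n (f k) (φ k)) (∑ k, c k)
      = fromRows G₁ G₂ * D * (fromRows G₁ G₂)ᴴ := by
    rw [blockMat, hT, fromRows_mul, conjTranspose_fromRows_eq_fromCols_conjTranspose,
      fromRows_mul_fromCols]
    congr 1 <;> ext <;> simp [G₁, G₂, D, mul_apply, diagonal_apply, mul_comm]
  refine ⟨_, ⟨_, _, hblock ▸ hD.mul_mul_conjTranspose_same _, rfl⟩, ?_⟩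
  calc (Toep n fun m => g m).rank = (G₁ * D * G₁ᴴ).rank := by rw [hT]
    _ ≤ G₁ᴴ.rank := rank_mul_le_right _ _
    _ ≤ s := (rank_le_card_height _).trans_eq (Fintype.card_fin s)

theorem exists_mem_atomicSizes_le {n : ℕ} {x : Fin n → ℂ} {r : ℕ} (hr : r ∈ toeplitzRanks n x) :
    ∃ s ∈ atomicSizes n x, s ≤ r := by
  obtain ⟨u, t, hpsd, rfl⟩ := hr
  obtain ⟨v, hv⟩ := hpsd.exists_gram_eq
  let w : ℕ → EuclideanSpace ℂ (Fin n ⊕ Fin 1) := fun j =>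
    if h : j < n then v (Sum.inl ⟨j, h⟩) else 0
  have hwv : ∀ j : Fin n, w j = v (Sum.inl j) := fun j => dif_pos j.isLt
  have hToep : Toep n u = gram ℂ fun j : Fin n => w j := by
    ext a b
    rw [gram_apply, hwv, hwv, ← gram_apply, hv]
    rfl
  have hx : ∀ j : Fin n, x j = ⟪w j, v (Sum.inr 0)⟫_ℂ := fun j => by
    rw [hwv, ← gram_apply, hv]
    rfl
  rcases (rank_le_card_height (Toep n u)).lt_or_eq with hlt | heq
  · rw [Fintype.card_fin, hToep, rank_gram] at hlt
    have hdep : ¬LinearIndependent ℂ fun j : Fin n => w j := fun hli => by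
      rw [finrank_span_eq_card hli, Fintype.card_fin] at hlt
      exact hlt.ne rfl
    have hw : ∀ j k, j + 1 < n → k + 1 < n → ⟪w (j + 1), w (k + 1)⟫_ℂ = ⟪w j, w k⟫_ℂ :=
      fun j k hj hk => by
        simpa [hToep] using toep_apply_eq_of_sub_eq u (a := ⟨j + 1, hj⟩) (b := ⟨k + 1, hk⟩)
          (a' := ⟨j, by omega⟩) (b' := ⟨k, by omega⟩) (by push_cast; ring)
    obtain ⟨s, e, α, μ, hs, hμ, hwe⟩ := exists_unimodular_harmonic_sum hw hdep
    refine ⟨_, card_mem_atomicSizes (fun m => conj (α m) * ⟪e m, v (Sum.inr 0)⟫_ℂ)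
      (fun m => conj (μ m)) (by simpa using hμ) fun j => ?_, ?_⟩
    · rw [hx, hwe j j.isLt, sum_inner]
      simp only [inner_smul_left, map_mul, map_pow]
      exact Finset.sum_congr rfl fun m _ => by ring
    · simpa [hToep, rank_gram] using hs
  · exact ⟨n, self_mem_atomicSizes n x, by rw [heq, Fintype.card_fin]⟩

theorem atomic_l0_eq_rank_min_general (n : ℕ) (x : Fin n → ℂ) :
    sInf {s : ℕ | ∃ (c : Fin s → ℝ) (f φ : Fin s → ℝ),
        (∀ k, 0 ≤ c k) ∧ (∀ k, f k ∈ Set.Ico (0 : ℝ) 1) ∧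
        (∀ k, φ k ∈ Set.Ico (0 : ℝ) (2 * Real.pi)) ∧
        x = ∑ k, (c k : ℂ) • atom n (f k) (φ k)} =
      sInf {r : ℕ | ∃ (u : Fin n → ℂ) (t : ℝ),
        (blockMat n u x t).PosSemidef ∧ r = (Toep n u).rank} :=
  csInf_eq_csInf_of_forall_exists_le (fun _ hs => exists_mem_toeplitzRanks_le hs)
    (fun _ hr => exists_mem_atomicSizes_le hr)

/-- The sparsest atomic decomposition size `‖x‖_{𝒜,0}` equals the optimal value of the
Toeplitz rank minimization problem. -/
theorem atomic_l0_eq_rank_min (n : ℕ) (hn : 0 < n) (x : Fin n → ℂ) (hx : x ≠ 0) :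
    sInf {s : ℕ | ∃ (c : Fin s → ℝ) (f φ : Fin s → ℝ),
        (∀ k, 0 ≤ c k) ∧ (∀ k, f k ∈ Set.Ico (0 : ℝ) 1) ∧
        (∀ k, φ k ∈ Set.Ico (0 : ℝ) (2 * Real.pi)) ∧
        x = ∑ k, (c k : ℂ) • atom n (f k) (φ k)} =
      sInf {r : ℕ | ∃ (u : Fin n → ℂ) (t : ℝ),
        (blockMat n u x t).PosSemidef ∧ r = (Toep n u).rank} :=
  atomic_l0_eq_rank_min_general n x
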